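/- arXiv:math/0206234 — 3 statements merged into one kernel-verified Lean document; each statement's English description precedes it below -/
import Mathlib

section
/- Let C = {v_0,...,v_{2n}} be a uniform balanced configuration labeled by increasing arguments, with indices modulo m = 2n+1. Then det(v_k, v_{k+n}) = det(v_0, v_n) for all k. -/
noncomputable section
open Real

/-- Determinant of two plane vectors, identifying `ℝ²` with `ℂ`: `det(z,w) = Im(z̄·w)`. -/
def cdet (z w : ℂ) : ℝ := z.re * w.im - z.im * w.re

/-- A configuration is balanced if for every index `i` and every real `x`, the number of
indices `j ≠ i` with `cdet (v i) (v j) = x` equals the number with value `-x`. -/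
def BalancedConfig {m : ℕ} (v : Fin m → ℂ) : Prop :=
  ∀ i : Fin m, ∀ x : ℝ,
    {j : Fin m | j ≠ i ∧ cdet (v i) (v j) = x}.ncard =
    {j : Fin m | j ≠ i ∧ cdet (v i) (v j) = -x}.ncard

/-- A configuration is uniform if every pair of distinct vectors is linearly independent
over `ℝ`. -/
def UniformConfig {m : ℕ} (v : Fin m → ℂ) : Prop :=
  ∀ i j : Fin m, i ≠ j → LinearIndependent ℝ ![v i, v j]

lemma cdet_exp (r s a b : ℝ) :
    cdet ((r:ℂ) * Complex.exp (a * Complex.I)) ((s:ℂ) * Complex.exp (b * Complex.I))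
      = r * s * Real.sin (b - a) := by
  simp [cdet, Complex.mul_re, Complex.mul_im, Complex.exp_ofReal_mul_I_re,
    Complex.exp_ofReal_mul_I_im, Real.sin_sub]
  ring

lemma cdet_swap (z w : ℂ) : cdet z w = - cdet w z := by simp [cdet]; ring

lemma cdet_add_right (z w w' : ℂ) : cdet z (w + w') = cdet z w + cdet z w' := by
  simp [cdet]; ring

lemma cdet_parallel (z z' w : ℂ) (hw : w ≠ 0) (h1 : cdet z w = 0) (h2 : cdet z' w = 0) :
    cdet z z' = 0 := by
  have hw' : w.re ≠ 0 ∨ w.im ≠ 0 := by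
    by_contra hc
    push_neg at hc
    exact hw (Complex.ext hc.1 hc.2)
  unfold cdet at *
  rcases hw' with h | h
  · have key : (z.re * z'.im - z.im * z'.re) * w.re = 0 := by linear_combination z'.re * h1 - z.re * h2
    have := mul_eq_zero.mp key
    tauto
  · have key : (z.re * z'.im - z.im * z'.re) * w.im = 0 := by linear_combination z'.im * h1 - z.im * h2
    have := mul_eq_zero.mp key
    tauto

lemma cdet_ne_zero_of_li (z w : ℂ) (h : LinearIndependent ℝ ![z, w]) : cdet z w ≠ 0 := by
  intro h0
  rw [LinearIndependent.pair_iff] at h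
  rcases eq_or_ne w 0 with rfl | hw
  · simpa using (h 0 1 (by simp)).2
  have hw' : w.re ≠ 0 ∨ w.im ≠ 0 := by
    by_contra hc
    push_neg at hc
    exact hw (Complex.ext hc.1 hc.2)
  unfold cdet at h0
  rcases hw' with hre | him
  · refine hre ?_
    refine (h w.re (-z.re) ?_).1
    apply Complex.ext <;> simp [Complex.real_smul, Complex.mul_re, Complex.mul_im] <;> linarith
  · refine him ?_
    refine (h w.im (-z.im) ?_).1
    apply Complex.ext <;> simp [Complex.real_smul, Complex.mul_re, Complex.mul_im] <;> linarith

section Per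
variable {n : ℕ} {v : ℤ → ℂ}

lemma v_shift (hper : ∀ k : ℤ, v (k + (2*n+1)) = v k) :
    ∀ (q : ℤ) (k : ℤ), v (k + (2*n+1) * q) = v k := by
  have hper' : ∀ x : ℤ, v (x - (2*n+1)) = v x := by
    intro x
    have h := hper (x - (2*n+1))
    have e : x - (2*(n:ℤ)+1) + (2*(n:ℤ)+1) = x := by ring
    rw [e] at h
    exact h.symm
  intro q
  induction q using Int.induction_on with
  | zero => simp
  | succ a ih =>
      intro k
      have e : k + (2 * (n:ℤ) + 1) * ((a:ℤ) + 1) = (k + (2 * (n:ℤ) + 1) * (a:ℤ)) + (2*(n:ℤ)+1) := by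
        ring
      rw [e, hper, ih]
  | pred a ih =>
      intro k
      have e : k + (2 * (n:ℤ) + 1) * (-(a:ℤ) - 1) = (k + (2 * (n:ℤ) + 1) * (-(a:ℤ))) - (2*(n:ℤ)+1) := by
        ring
      rw [e, hper', ih]

lemma v_congr (hper : ∀ k : ℤ, v (k + (2*n+1)) = v k) (a b : ℤ)
    (h : a % (2*(n:ℤ)+1) = b % (2*(n:ℤ)+1)) : v a = v b := by
  have key : ∀ c : ℤ, v c = v (c % (2*(n:ℤ)+1)) := by
    intro c
    have e : c % (2*(n:ℤ)+1) + (2*(n:ℤ)+1) * (c / (2*(n:ℤ)+1)) = c := Int.emod_add_mul_ediv c _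
    calc v c = v (c % (2*(n:ℤ)+1) + (2*(n:ℤ)+1) * (c / (2*(n:ℤ)+1))) := by rw [e]
    _ = v (c % (2*(n:ℤ)+1)) := v_shift hper _ _
  rw [key a, key b, h]
end Per

open Fin.NatCast

def jmp (n : ℕ) (i : Fin (2*n+1)) (t : ℕ) : Fin (2*n+1) := i + (t : Fin (2*n+1))

section Gam
variable {n : ℕ} {v : ℤ → ℂ} {ρ α : Fin (2*n+1) → ℝ}

lemma jmp_val (i : Fin (2*n+1)) {t : ℕ} (ht : t ≤ 2*n) :
    (jmp n i t).val = (i.val + t) % (2*n+1) := by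
  unfold jmp
  rw [Fin.add_def]
  simp only [Fin.val_natCast]
  rw [Nat.mod_eq_of_lt (show t < 2*n+1 by omega)]

lemma jmp_val_lo {i : Fin (2*n+1)} {t : ℕ} (h : i.val + t < 2*n+1) (ht : t ≤ 2*n) :
    (jmp n i t).val = i.val + t := by
  rw [jmp_val i ht, Nat.mod_eq_of_lt h]

lemma jmp_val_hi {i : Fin (2*n+1)} {t : ℕ} (h : ¬ i.val + t < 2*n+1) (ht : t ≤ 2*n) :
    (jmp n i t).val = i.val + t - (2*n+1) := by
  have hi := i.isLt
  rw [jmp_val i ht, Nat.mod_eq_sub_mod (by omega), Nat.mod_eq_of_lt (by omega)]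

lemma jmp_ne (i : Fin (2*n+1)) {t : ℕ} (h1 : 1 ≤ t) (ht : t ≤ 2*n) :
    jmp n i t ≠ i := by
  intro h
  have hv : (jmp n i t).val = i.val := congrArg Fin.val h
  have hi := i.isLt
  by_cases hc : i.val + t < 2*n+1
  · rw [jmp_val_lo hc ht] at hv; omega
  · rw [jmp_val_hi hc ht] at hv; omega

def gam (n : ℕ) (α : Fin (2*n+1) → ℝ) (i : Fin (2*n+1)) (t : ℕ) : ℝ :=
  if i.val + t < 2*n+1 then α (jmp n i t) - α i
  else α (jmp n i t) - α i + 2*π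

lemma sin_gam (i : Fin (2*n+1)) (t : ℕ) :
    Real.sin (gam n α i t) = Real.sin (α (jmp n i t) - α i) := by
  unfold gam; split
  · rfl
  · exact Real.sin_add_two_pi _

lemma gam_mem (hα : ∀ i, α i ∈ Set.Ico 0 (2*π)) (hmono : StrictMono α)
    (i : Fin (2*n+1)) {t : ℕ} (h1 : 1 ≤ t) (ht : t ≤ 2*n) :
    0 < gam n α i t ∧ gam n α i t < 2*π := by
  have hi := i.isLt
  have ha1 := (hα i).1
  have ha2 := (hα i).2
  have hb1 := (hα (jmp n i t)).1
  have hb2 := (hα (jmp n i t)).2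
  unfold gam
  by_cases hc : i.val + t < 2*n+1
  · rw [if_pos hc]
    have hlt : α i < α (jmp n i t) := by
      apply hmono
      rw [Fin.lt_def, jmp_val_lo hc ht]
      omega
    constructor <;> linarith
  · rw [if_neg hc]
    have hlt : α (jmp n i t) < α i := by
      apply hmono
      rw [Fin.lt_def, jmp_val_hi hc ht]
      omega
    constructor <;> linarith

lemma gam_strict (hα : ∀ i, α i ∈ Set.Ico 0 (2*π)) (hmono : StrictMono α)
    (i : Fin (2*n+1)) {t t' : ℕ} (h1 : 1 ≤ t) (h2 : t < t') (h3 : t' ≤ 2*n) :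
    gam n α i t < gam n α i t' := by
  have hi := i.isLt
  have ht : t ≤ 2*n := by omega
  unfold gam
  by_cases hA : i.val + t' < 2*n+1
  · have hB : i.val + t < 2*n+1 := by omega
    rw [if_pos hB, if_pos hA]
    have hlt : α (jmp n i t) < α (jmp n i t') := by
      apply hmono
      rw [Fin.lt_def, jmp_val_lo hB ht, jmp_val_lo hA h3]
      omega
    linarith
  · by_cases hB : i.val + t < 2*n+1
    · rw [if_pos hB, if_neg hA]
      have b1 : α (jmp n i t) < 2*π := (hα _).2
      have b2 : 0 ≤ α (jmp n i t') := (hα _).1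
      linarith
    · rw [if_neg hB, if_neg hA]
      have hlt : α (jmp n i t) < α (jmp n i t') := by
        apply hmono
        rw [Fin.lt_def, jmp_val_hi hB ht, jmp_val_hi hA h3]
        omega
      linarith

lemma D_formula (hv : ∀ i : Fin (2*n+1), v (i : ℕ) = (ρ i : ℂ) * Complex.exp (α i * Complex.I))
    (i j : Fin (2*n+1)) :
    cdet (v (i : ℕ)) (v (j : ℕ)) = ρ i * ρ j * Real.sin (α j - α i) := by
  rw [hv i, hv j, cdet_exp]

lemma D_ne_zero (hunif : UniformConfig (fun i : Fin (2*n+1) => v (i : ℕ)))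
    {i j : Fin (2*n+1)} (hij : i ≠ j) :
    cdet (v (i : ℕ)) (v (j : ℕ)) ≠ 0 :=
  cdet_ne_zero_of_li _ _ (hunif i j hij)

lemma D_pos_iff_gam (hρ : ∀ i, 0 < ρ i) (hα : ∀ i, α i ∈ Set.Ico 0 (2*π))
    (hmono : StrictMono α)
    (hunif : UniformConfig (fun i : Fin (2*n+1) => v (i : ℕ)))
    (hv : ∀ i : Fin (2*n+1), v (i : ℕ) = (ρ i : ℂ) * Complex.exp (α i * Complex.I))
    (i : Fin (2*n+1)) {t : ℕ} (h1 : 1 ≤ t) (ht : t ≤ 2*n) :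
    (0 < cdet (v (i : ℕ)) (v ((jmp n i t) : ℕ))) ↔ gam n α i t < π := by
  set j := jmp n i t with hj
  have hne : i ≠ j := fun h => jmp_ne i h1 ht h.symm
  have hD : cdet (v (i : ℕ)) (v (j : ℕ)) = ρ i * ρ j * Real.sin (gam n α i t) := by
    rw [D_formula hv i j, hj, sin_gam]
  have hρij : 0 < ρ i * ρ j := mul_pos (hρ i) (hρ j)
  have hDne : cdet (v (i : ℕ)) (v (j : ℕ)) ≠ 0 := D_ne_zero hunif hne
  have hsne : Real.sin (gam n α i t) ≠ 0 := by
    intro h0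
    exact hDne (by rw [hD, h0, mul_zero])
  have hmem := gam_mem hα hmono i h1 ht
  have hgne : gam n α i t ≠ π := by
    intro h
    rw [h, Real.sin_pi] at hsne
    exact hsne rfl
  have hiff : 0 < cdet (v (i : ℕ)) (v (j : ℕ)) ↔ 0 < Real.sin (gam n α i t) := by
    rw [hD]
    constructor
    · intro h; nlinarith
    · intro h; nlinarith
  rw [hiff]
  constructor
  · intro h
    by_contra hge
    push_neg at hge
    have h2 : π < gam n α i t := lt_of_le_of_ne hge (Ne.symm hgne)
    have h3 : 0 < Real.sin (gam n α i t - π) :=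
      Real.sin_pos_of_pos_of_lt_pi (by linarith) (by linarith [hmem.2, Real.pi_pos])
    rw [Real.sin_sub_pi] at h3
    linarith
  · intro h
    exact Real.sin_pos_of_pos_of_lt_pi hmem.1 h

end Gam

section Count
variable {n : ℕ} {v : ℤ → ℂ} {ρ α : Fin (2*n+1) → ℝ}

lemma balanced_fiber (hbal : BalancedConfig (fun i : Fin (2*n+1) => v (i : ℕ)))
    (i : Fin (2*n+1)) (x : ℝ) :
    ((Finset.univ.filter (fun j : Fin (2*n+1) => j ≠ i ∧ cdet (v (i : ℕ)) (v (j : ℕ)) = x)).card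
   = (Finset.univ.filter (fun j : Fin (2*n+1) => j ≠ i ∧ cdet (v (i : ℕ)) (v (j : ℕ)) = -x)).card) := by
  classical
  have h := hbal i x
  rw [Set.ncard_eq_toFinset_card', Set.ncard_eq_toFinset_card'] at h
  have e1 : {j : Fin (2*n+1) | j ≠ i ∧ cdet (v (i : ℕ)) (v (j : ℕ)) = x}.toFinset
      = Finset.univ.filter (fun j : Fin (2*n+1) => j ≠ i ∧ cdet (v (i : ℕ)) (v (j : ℕ)) = x) := by
    ext j; simp
  have e2 : {j : Fin (2*n+1) | j ≠ i ∧ cdet (v (i : ℕ)) (v (j : ℕ)) = -x}.toFinset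
      = Finset.univ.filter (fun j : Fin (2*n+1) => j ≠ i ∧ cdet (v (i : ℕ)) (v (j : ℕ)) = -x) := by
    ext j; simp
  rw [e1, e2] at h
  exact h

lemma row_pos_cardP (hbal : BalancedConfig (fun i : Fin (2*n+1) => v (i : ℕ)))
    (hunif : UniformConfig (fun i : Fin (2*n+1) => v (i : ℕ)))
    (i : Fin (2*n+1)) :
    (Finset.univ.filter (fun j : Fin (2*n+1) =>
        j ≠ i ∧ 0 < cdet (v (i : ℕ)) (v (j : ℕ)))).card = n := by
  classical
  set f : Fin (2*n+1) → ℝ := fun j => cdet (v (i : ℕ)) (v (j : ℕ)) with hf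
  set T : Finset (Fin (2*n+1)) := Finset.univ.filter (fun j => j ≠ i) with hT
  have hmemT : ∀ j : Fin (2*n+1), j ∈ T ↔ j ≠ i := by
    intro j; rw [hT, Finset.mem_filter]; simp
  have hTcard : T.card = 2*n := by
    rw [hT, Finset.filter_ne', Finset.card_erase_of_mem (Finset.mem_univ i), Finset.card_univ]
    simp
  have hf0 : ∀ j ∈ T, f j ≠ 0 := by
    intro j hj
    exact D_ne_zero hunif (Ne.symm ((hmemT j).mp hj))
  have hfib : ∀ x : ℝ, (T.filter (fun j => f j = x)).card = (T.filter (fun j => f j = -x)).card := by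
    intro x
    have h := balanced_fiber hbal i x
    have e1 : T.filter (fun j => f j = x)
        = Finset.univ.filter (fun j : Fin (2*n+1) => j ≠ i ∧ cdet (v (i : ℕ)) (v (j : ℕ)) = x) := by
      rw [hT, Finset.filter_filter]
    have e2 : T.filter (fun j => f j = -x)
        = Finset.univ.filter (fun j : Fin (2*n+1) => j ≠ i ∧ cdet (v (i : ℕ)) (v (j : ℕ)) = -x) := by
      rw [hT, Finset.filter_filter]
    rw [e1, e2, h]
  set P : Finset (Fin (2*n+1)) := T.filter (fun j => 0 < f j) with hP
  set N : Finset (Fin (2*n+1)) := T.filter (fun j => f j < 0) with hN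
  have ePos : ∀ x : ℝ, 0 < x →
      P.filter (fun j => f j = x) = T.filter (fun j => f j = x) := by
    intro x hx
    rw [hP, Finset.filter_filter]
    apply Finset.filter_congr
    intro j _
    constructor
    · rintro ⟨_, h2⟩; exact h2
    · intro h2; exact ⟨h2 ▸ hx, h2⟩
  have eNeg : ∀ x : ℝ, x < 0 →
      N.filter (fun j => f j = x) = T.filter (fun j => f j = x) := by
    intro x hx
    rw [hN, Finset.filter_filter]
    apply Finset.filter_congr
    intro j _
    constructor
    · rintro ⟨_, h2⟩; exact h2
    · intro h2; exact ⟨h2 ▸ hx, h2⟩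
  have hximg : ∀ x ∈ P.image f, 0 < x := by
    intro x hx
    obtain ⟨j0, hj0, rfl⟩ := Finset.mem_image.mp hx
    exact (Finset.mem_filter.mp hj0).2
  have hyimg : ∀ y ∈ N.image f, y < 0 := by
    intro y hy
    obtain ⟨j0, hj0, rfl⟩ := Finset.mem_image.mp hy
    exact (Finset.mem_filter.mp hj0).2
  have himg : ∀ x ∈ P.image f, -x ∈ N.image f := by
    intro x hx
    have hxpos := hximg x hx
    obtain ⟨j0, hj0, hj0x⟩ := Finset.mem_image.mp hx
    have hne : (T.filter (fun j => f j = -x)).Nonempty := by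
      rw [← Finset.card_pos, ← hfib x]
      exact Finset.card_pos.mpr ⟨j0, Finset.mem_filter.mpr ⟨(Finset.mem_filter.mp hj0).1, hj0x⟩⟩
    obtain ⟨j1, hj1⟩ := hne
    have hj1' := Finset.mem_filter.mp hj1
    exact Finset.mem_image.mpr ⟨j1, Finset.mem_filter.mpr ⟨hj1'.1, by rw [hj1'.2]; linarith⟩, hj1'.2⟩
  have himg' : ∀ y ∈ N.image f, -y ∈ P.image f := by
    intro y hy
    have hyneg := hyimg y hy
    obtain ⟨j0, hj0, hj0y⟩ := Finset.mem_image.mp hy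
    have hne : (T.filter (fun j => f j = -y)).Nonempty := by
      rw [← Finset.card_pos]
      have := hfib (-y)
      rw [neg_neg] at this
      rw [this]
      exact Finset.card_pos.mpr ⟨j0, Finset.mem_filter.mpr ⟨(Finset.mem_filter.mp hj0).1, hj0y⟩⟩
    obtain ⟨j1, hj1⟩ := hne
    have hj1' := Finset.mem_filter.mp hj1
    exact Finset.mem_image.mpr ⟨j1, Finset.mem_filter.mpr ⟨hj1'.1, by rw [hj1'.2]; linarith⟩, hj1'.2⟩
  have hPN : P.card = N.card := by
    rw [Finset.card_eq_sum_card_image f P, Finset.card_eq_sum_card_image f N]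
    rw [Finset.sum_congr rfl (fun x hx => by
      rw [ePos x (hximg x hx), hfib x, ← eNeg (-x) (by have := hximg x hx; linarith)])]
    apply Finset.sum_nbij' (fun x => -x) (fun y => -y) himg himg'
    · intro x _; simp
    · intro y _; simp
    · intro x _; rfl
  have hPNsum : P.card + N.card = 2*n := by
    have hsplit := Finset.card_filter_add_card_filter_not (s := T) (p := fun j => 0 < f j)
    have eN : T.filter (fun j => ¬ 0 < f j) = N := by
      rw [hN]
      apply Finset.filter_congr
      intro j hj
      have h0 := hf0 j hj
      constructor
      · intro h; exact lt_of_le_of_ne (not_lt.mp h) h0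
      · intro h; exact not_lt.mpr (le_of_lt h)
    rw [eN, hTcard, ← hP] at hsplit
    exact hsplit
  have hPcard : P.card = n := by omega
  have efin : Finset.univ.filter (fun j : Fin (2*n+1) =>
      j ≠ i ∧ 0 < cdet (v (i : ℕ)) (v (j : ℕ))) = P := by
    ext j
    rw [Finset.mem_filter, hP, Finset.mem_filter, hT, Finset.mem_filter]
    show _ ↔ _ ∧ 0 < cdet (v ((i:ℕ):ℤ)) (v ((j:ℕ):ℤ))
    tauto
  rw [efin]
  exact hPcard

lemma row_pos_card (hρ : ∀ i, 0 < ρ i) (hα : ∀ i, α i ∈ Set.Ico 0 (2*π))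
    (hmono : StrictMono α)
    (hbal : BalancedConfig (fun i : Fin (2*n+1) => v (i : ℕ)))
    (hunif : UniformConfig (fun i : Fin (2*n+1) => v (i : ℕ)))
    (i : Fin (2*n+1)) :
    ((Finset.Icc 1 (2*n)).filter
        (fun t => 0 < cdet (v (i : ℕ)) (v ((jmp n i t) : ℕ)))).card = n := by
  classical
  refine Eq.trans ?_ (row_pos_cardP hbal hunif i)
  apply Finset.card_bij' (fun t _ => jmp n i t)
      (fun j _ => ((j - i : Fin (2*n+1))).val)
  case hi =>
    intro t ht
    rw [Finset.mem_filter, Finset.mem_Icc] at ht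
    obtain ⟨⟨h1, h2⟩, h3⟩ := ht
    rw [Finset.mem_filter]
    exact ⟨Finset.mem_univ _, jmp_ne i h1 h2, h3⟩
  case hj =>
    intro j hj
    rw [Finset.mem_filter] at hj
    obtain ⟨_, hji, hpos⟩ := hj
    have hsub : j - i ≠ 0 := sub_ne_zero.mpr hji
    have hval : ((j - i : Fin (2*n+1))).val ≠ 0 := by
      intro h
      exact hsub (Fin.ext h)
    have hlt := ((j - i : Fin (2*n+1))).isLt
    have hjeq : jmp n i ((j - i : Fin (2*n+1))).val = j := by
      unfold jmp
      rw [Fin.cast_val_eq_self]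
      abel
    rw [Finset.mem_filter, Finset.mem_Icc]
    refine ⟨⟨by omega, by omega⟩, ?_⟩
    rw [hjeq]
    exact hpos
  case left_inv =>
    intro t ht
    rw [Finset.mem_filter, Finset.mem_Icc] at ht
    obtain ⟨⟨h1, h2⟩, _⟩ := ht
    unfold jmp
    rw [add_sub_cancel_left, Fin.val_natCast, Nat.mod_eq_of_lt (by omega)]
  case right_inv =>
    intro j hj
    unfold jmp
    rw [Fin.cast_val_eq_self]
    abel

lemma D_pos_iff_le (hn : 1 ≤ n) (hρ : ∀ i, 0 < ρ i) (hα : ∀ i, α i ∈ Set.Ico 0 (2*π))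
    (hmono : StrictMono α)
    (hbal : BalancedConfig (fun i : Fin (2*n+1) => v (i : ℕ)))
    (hunif : UniformConfig (fun i : Fin (2*n+1) => v (i : ℕ)))
    (hv : ∀ i : Fin (2*n+1), v (i : ℕ) = (ρ i : ℂ) * Complex.exp (α i * Complex.I))
    (i : Fin (2*n+1)) {t : ℕ} (h1 : 1 ≤ t) (ht : t ≤ 2*n) :
    (0 < cdet (v (i : ℕ)) (v ((jmp n i t) : ℕ))) ↔ t ≤ n := by
  classical
  set St := (Finset.Icc 1 (2*n)).filter
      (fun s => 0 < cdet (v (i : ℕ)) (v ((jmp n i s) : ℕ))) with hSt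
  have hcard : St.card = n := row_pos_card hρ hα hmono hbal hunif i
  have hdc : ∀ s s' : ℕ, 1 ≤ s' → s' ≤ s → s ≤ 2*n → s ∈ St → s' ∈ St := by
    intro s s' hs1 hss hs2 hsmem
    rcases eq_or_lt_of_le hss with rfl | hlt
    · exact hsmem
    · rw [hSt, Finset.mem_filter, Finset.mem_Icc] at hsmem ⊢
      refine ⟨⟨hs1, by omega⟩, ?_⟩
      rw [D_pos_iff_gam hρ hα hmono hunif hv i hs1 (by omega)]
      have hgam := (D_pos_iff_gam hρ hα hmono hunif hv i (by omega) hs2).mp hsmem.2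
      have := gam_strict hα hmono i hs1 hlt hs2
      linarith
  have hsub : Finset.Icc 1 n ⊆ St := by
    intro s hs
    rw [Finset.mem_Icc] at hs
    by_contra hns
    have hSsub : St ⊆ Finset.Icc 1 (s-1) := by
      intro u hu
      have hu' := hu
      rw [hSt, Finset.mem_filter, Finset.mem_Icc] at hu'
      rw [Finset.mem_Icc]
      refine ⟨hu'.1.1, ?_⟩
      by_contra hus
      exact hns (hdc u s hs.1 (by omega) hu'.1.2 hu)
    have := Finset.card_le_card hSsub
    rw [hcard, Nat.card_Icc] at this
    omega
  have hEq : Finset.Icc 1 n = St := by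
    apply Finset.eq_of_subset_of_card_le hsub
    rw [hcard, Nat.card_Icc]
    omega
  constructor
  · intro hpos
    have htmem : t ∈ St := by
      rw [hSt, Finset.mem_filter, Finset.mem_Icc]
      exact ⟨⟨h1, ht⟩, hpos⟩
    rw [← hEq, Finset.mem_Icc] at htmem
    exact htmem.2
  · intro hle
    have : t ∈ St := by
      rw [← hEq, Finset.mem_Icc]
      exact ⟨h1, hle⟩
    rw [hSt, Finset.mem_filter] at this
    exact this.2

lemma D_neg_iff_gt (hn : 1 ≤ n) (hρ : ∀ i, 0 < ρ i) (hα : ∀ i, α i ∈ Set.Ico 0 (2*π))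
    (hmono : StrictMono α)
    (hbal : BalancedConfig (fun i : Fin (2*n+1) => v (i : ℕ)))
    (hunif : UniformConfig (fun i : Fin (2*n+1) => v (i : ℕ)))
    (hv : ∀ i : Fin (2*n+1), v (i : ℕ) = (ρ i : ℂ) * Complex.exp (α i * Complex.I))
    (i : Fin (2*n+1)) {t : ℕ} (h1 : 1 ≤ t) (ht : t ≤ 2*n) :
    (cdet (v (i : ℕ)) (v ((jmp n i t) : ℕ)) < 0) ↔ n < t := by
  have hne : cdet (v (i : ℕ)) (v ((jmp n i t) : ℕ)) ≠ 0 :=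
    D_ne_zero hunif (fun h => jmp_ne i h1 ht h.symm)
  have hpos := D_pos_iff_le hn hρ hα hmono hbal hunif hv i h1 ht
  constructor
  · intro h
    by_contra hc
    push_neg at hc
    have := hpos.mpr hc
    linarith
  · intro h
    rcases lt_trichotomy (cdet (v (i : ℕ)) (v ((jmp n i t) : ℕ))) 0 with hc | hc | hc
    · exact hc
    · exact absurd hc hne
    · have := hpos.mp hc; omega

end Count

section Cover
variable {n : ℕ} {v : ℤ → ℂ}

lemma cdet_self_neg (z : ℂ) : cdet z (-z) = 0 := by simp [cdet]; ring

lemma cover_aux (hbal : BalancedConfig (fun i : Fin (2*n+1) => v (i : ℕ)))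
    (hunif : UniformConfig (fun i : Fin (2*n+1) => v (i : ℕ)))
    {a b : Fin (2*n+1)} (hab : a < b) :
    ∃ i : Fin (2*n+1), i ≠ a ∧ i ≠ b ∧
      cdet (v (i : ℕ)) (v (a : ℕ)) + cdet (v (i : ℕ)) (v (b : ℕ)) = 0 := by
  classical
  set Pairs : Finset (Fin (2*n+1) × Fin (2*n+1)) :=
    Finset.univ.filter (fun p => p.1 < p.2) with hPairs
  set Q : Fin (2*n+1) → Finset (Fin (2*n+1) × Fin (2*n+1)) := fun i =>
    Pairs.filter (fun p => p.1 ≠ i ∧ p.2 ≠ i ∧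
      cdet (v (i : ℕ)) (v (p.1 : ℕ)) + cdet (v (i : ℕ)) (v (p.2 : ℕ)) = 0) with hQ
  -- cardinality of Pairs
  have hOD : (Finset.univ : Finset (Fin (2*n+1))).offDiag.card
      = (2*n+1)*(2*n+1) - (2*n+1) := by
    rw [Finset.offDiag_card]
    simp
  have hend : Finset.univ.offDiag.filter (fun p : Fin (2*n+1) × Fin (2*n+1) => p.1 < p.2)
      = Pairs := by
    ext p
    simp only [hPairs, Finset.mem_filter, Finset.mem_offDiag, Finset.mem_univ, true_and]
    constructor
    · rintro ⟨_, h⟩; exact h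
    · intro h; exact ⟨ne_of_lt h, h⟩
  have hswapeq : Finset.univ.offDiag.filter
        (fun p : Fin (2*n+1) × Fin (2*n+1) => ¬ p.1 < p.2)
      = Finset.univ.offDiag.filter (fun p => p.2 < p.1) := by
    apply Finset.filter_congr
    intro p hp
    rw [Finset.mem_offDiag] at hp
    simp only [not_lt]
    constructor
    · intro h; exact lt_of_le_of_ne h (Ne.symm hp.2.2)
    · intro h; exact le_of_lt h
  have hswapcard : (Finset.univ.offDiag.filter
      (fun p : Fin (2*n+1) × Fin (2*n+1) => p.2 < p.1)).card = Pairs.card := by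
    apply Finset.card_bij' (fun p _ => (p.2, p.1)) (fun p _ => (p.2, p.1))
    case hi =>
      intro p hp
      rw [Finset.mem_filter, Finset.mem_offDiag] at hp
      rw [hPairs, Finset.mem_filter]
      exact ⟨Finset.mem_univ _, hp.2⟩
    case hj =>
      intro p hp
      rw [hPairs, Finset.mem_filter] at hp
      rw [Finset.mem_filter, Finset.mem_offDiag]
      exact ⟨⟨Finset.mem_univ _, Finset.mem_univ _, Ne.symm (ne_of_lt hp.2)⟩, hp.2⟩
    case left_inv => intro p _; rfl
    case right_inv => intro p _; rfl
  have hPairscard : Pairs.card = (2*n+1)*n := by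
    have hsplit := Finset.card_filter_add_card_filter_not
      (s := (Finset.univ : Finset (Fin (2*n+1))).offDiag)
      (p := fun p : Fin (2*n+1) × Fin (2*n+1) => p.1 < p.2)
    rw [hend, hswapeq, hswapcard, hOD] at hsplit
    have he : (2*n+1)*(2*n+1) - (2*n+1) = 2*((2*n+1)*n) :=
      Nat.sub_eq_of_eq_add (by ring)
    rw [he] at hsplit
    linarith
  -- each Q i has at least n elements
  have hQcard : ∀ i : Fin (2*n+1), n ≤ (Q i).card := by
    intro i
    set f : Fin (2*n+1) → ℝ := fun j => cdet (v (i : ℕ)) (v (j : ℕ)) with hf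
    set P : Finset (Fin (2*n+1)) :=
      Finset.univ.filter (fun j => j ≠ i ∧ 0 < f j) with hP
    have hPcard : P.card = n := row_pos_cardP hbal hunif i
    have hex : ∀ j : Fin (2*n+1), ∃ j', j ∈ P → (j' ≠ i ∧ f j' = - f j) := by
      intro j
      by_cases hj : j ∈ P
      · have hjP := Finset.mem_filter.mp hj
        have h := balanced_fiber hbal i (f j)
        have hne : (Finset.univ.filter (fun j' : Fin (2*n+1) =>
            j' ≠ i ∧ cdet (v (i : ℕ)) (v (j' : ℕ)) = -(f j))).Nonempty := by
          rw [← Finset.card_pos, ← h]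
          exact Finset.card_pos.mpr
            ⟨j, Finset.mem_filter.mpr ⟨Finset.mem_univ _, hjP.2.1, rfl⟩⟩
        obtain ⟨j', hj'⟩ := hne
        have hj'' := Finset.mem_filter.mp hj'
        exact ⟨j', fun _ => ⟨hj''.2.1, hj''.2.2⟩⟩
      · exact ⟨i, fun h => absurd h hj⟩
    choose ψ hψ using hex
    set F : Fin (2*n+1) → Fin (2*n+1) × Fin (2*n+1) :=
      fun j => if j < ψ j then (j, ψ j) else (ψ j, j) with hF
    have hmaps : ∀ j ∈ P, F j ∈ Q i := by
      intro j hj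
      have hjP := Finset.mem_filter.mp hj
      have hspec := hψ j hj
      have hfj : 0 < f j := hjP.2.2
      have hfψ : f (ψ j) < 0 := by rw [hspec.2]; linarith
      have hjψ : j ≠ ψ j := by
        intro h
        rw [← h] at hfψ
        linarith
      simp only [hQ, hPairs, hF, Finset.mem_filter]
      by_cases hlt : j < ψ j
      · rw [if_pos hlt]
        exact ⟨⟨Finset.mem_univ _, hlt⟩, hjP.2.1, hspec.1, by
          show f j + f (ψ j) = 0
          rw [hspec.2]; ring⟩
      · rw [if_neg hlt]
        have : ψ j < j := lt_of_le_of_ne (not_lt.mp hlt) (Ne.symm hjψ)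
        exact ⟨⟨Finset.mem_univ _, this⟩, hspec.1, hjP.2.1, by
          show f (ψ j) + f j = 0
          rw [hspec.2]; ring⟩
    have hinj : Set.InjOn F P := by
      intro j hj j' hj' heq
      have hfj : 0 < f j := (Finset.mem_filter.mp hj).2.2
      have hfj' : 0 < f j' := (Finset.mem_filter.mp hj').2.2
      have hfψj : f (ψ j) < 0 := by rw [(hψ j hj).2]; linarith
      have hfψj' : f (ψ j') < 0 := by rw [(hψ j' hj').2]; linarith
      simp only [hF] at heq
      by_cases h1 : j < ψ j <;> by_cases h2 : j' < ψ j' <;>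
        simp only [if_pos, if_neg, h1, h2, if_true, if_false, Prod.mk.injEq] at heq
      · exact heq.1
      · exfalso; rw [heq.1] at hfj; linarith
      · exfalso; rw [← heq.1] at hfj'; linarith
      · exact heq.2
    calc n = P.card := hPcard.symm
    _ ≤ (Q i).card := Finset.card_le_card_of_injOn F hmaps hinj
  -- the Q i are pairwise disjoint
  have hdisj : ∀ i ∈ (Finset.univ : Finset (Fin (2*n+1))),
      ∀ i' ∈ (Finset.univ : Finset (Fin (2*n+1))), i ≠ i' → Disjoint (Q i) (Q i') := by
    intro i _ i' _ hii'
    rw [Finset.disjoint_left]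
    intro p hp hp'
    simp only [hQ, hPairs, Finset.mem_filter] at hp hp'
    have hw : v ((p.1 : ℕ) : ℤ) + v ((p.2 : ℕ) : ℤ) ≠ 0 := by
      intro h0
      have : v ((p.2 : ℕ) : ℤ) = - v ((p.1 : ℕ) : ℤ) := by
        linear_combination h0
      have hzero : cdet (v ((p.1 : ℕ) : ℤ)) (v ((p.2 : ℕ) : ℤ)) = 0 := by
        rw [this]; exact cdet_self_neg _
      exact D_ne_zero hunif (ne_of_lt hp.1.2) hzero
    have h1 : cdet (v ((i : ℕ) : ℤ)) (v ((p.1 : ℕ) : ℤ) + v ((p.2 : ℕ) : ℤ)) = 0 := by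
      rw [cdet_add_right]; exact hp.2.2.2
    have h2 : cdet (v ((i' : ℕ) : ℤ)) (v ((p.1 : ℕ) : ℤ) + v ((p.2 : ℕ) : ℤ)) = 0 := by
      rw [cdet_add_right]; exact hp'.2.2.2
    exact D_ne_zero hunif hii' (cdet_parallel _ _ _ hw h1 h2)
  -- conclusion by counting
  have hsub : (Finset.univ.biUnion Q) ⊆ Pairs := by
    intro p hp
    rw [Finset.mem_biUnion] at hp
    obtain ⟨i, _, hpi⟩ := hp
    simp only [hQ, Finset.mem_filter] at hpi
    exact hpi.1
  have hcardB : Pairs.card ≤ (Finset.univ.biUnion Q).card := by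
    rw [Finset.card_biUnion hdisj, hPairscard]
    calc (2*n+1)*n = ∑ _i : Fin (2*n+1), n := by
          rw [Finset.sum_const, Finset.card_univ, Fintype.card_fin, smul_eq_mul]
    _ ≤ ∑ i : Fin (2*n+1), (Q i).card := Finset.sum_le_sum (fun i _ => hQcard i)
  have hEq : Finset.univ.biUnion Q = Pairs :=
    Finset.eq_of_subset_of_card_le hsub hcardB
  have hmem : (a, b) ∈ Pairs := by
    rw [hPairs, Finset.mem_filter]
    exact ⟨Finset.mem_univ _, hab⟩
  rw [← hEq, Finset.mem_biUnion] at hmem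
  obtain ⟨i, _, hQi⟩ := hmem
  simp only [hQ, Finset.mem_filter] at hQi
  exact ⟨i, Ne.symm hQi.2.1, Ne.symm hQi.2.2.1, hQi.2.2.2⟩

lemma cover (hbal : BalancedConfig (fun i : Fin (2*n+1) => v (i : ℕ)))
    (hunif : UniformConfig (fun i : Fin (2*n+1) => v (i : ℕ)))
    {a b : Fin (2*n+1)} (hab : a ≠ b) :
    ∃ i : Fin (2*n+1), i ≠ a ∧ i ≠ b ∧
      cdet (v (i : ℕ)) (v (a : ℕ)) + cdet (v (i : ℕ)) (v (b : ℕ)) = 0 := by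
  rcases lt_or_gt_of_ne hab with h | h
  · exact cover_aux hbal hunif h
  · obtain ⟨i, h1, h2, h3⟩ := cover_aux hbal hunif h
    exact ⟨i, h2, h1, by linarith⟩

end Cover

section Final
variable {n : ℕ} {v : ℤ → ℂ}

lemma v_nat_mod (hper : ∀ k : ℤ, v (k + (2*n+1)) = v k) (x : ℕ) :
    v (((x % (2*n+1) : ℕ)) : ℤ) = v ((x : ℕ) : ℤ) := by
  apply v_congr hper
  push_cast
  exact Int.emod_emod_of_dvd _ dvd_rfl

end Final

theorem dets_at_distance_n_constant (n : ℕ) (hn : 1 ≤ n) (v : ℤ → ℂ)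
    (hper : ∀ k : ℤ, v (k + (2 * n + 1)) = v k)
    (hbal : BalancedConfig (fun i : Fin (2 * n + 1) => v (i : ℕ)))
    (hunif : UniformConfig (fun i : Fin (2 * n + 1) => v (i : ℕ)))
    (ρ α : Fin (2 * n + 1) → ℝ)
    (hρ : ∀ i, 0 < ρ i)
    (hα : ∀ i, α i ∈ Set.Ico 0 (2 * π))
    (hmono : StrictMono α)
    (hv : ∀ i : Fin (2 * n + 1), v (i : ℕ) = (ρ i : ℂ) * Complex.exp (α i * Complex.I)) :
    ∀ k : ℤ, cdet (v k) (v (k + n)) = cdet (v 0) (v n) := by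
  classical
  set d : ℤ → ℝ := fun k => cdet (v k) (v (k + (n : ℤ))) with hd
  have hdcongr : ∀ a b : ℤ, a % (2*(n:ℤ)+1) = b % (2*(n:ℤ)+1) → d a = d b := by
    intro a b h
    show cdet (v a) (v (a + (n:ℤ))) = cdet (v b) (v (b + (n:ℤ)))
    rw [v_congr hper a b h,
      v_congr hper (a + (n:ℤ)) (b + (n:ℤ)) (by rw [Int.add_emod, h, ← Int.add_emod])]
  have hrel : ∀ iF : Fin (2*n+1), d ((iF : ℕ) : ℤ) = d (((iF : ℕ) : ℤ) + ((n:ℤ)+1)) := by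
    intro iF
    have hn2 : 1 ≤ 2*n := by omega
    set j0 : Fin (2*n+1) := jmp n iF n with hj0def
    set j1 : Fin (2*n+1) := jmp n j0 1 with hj1def
    have hj1' : j1 = jmp n iF (n+1) := by
      rw [hj1def, hj0def]
      unfold jmp
      push_cast
      abel
    have hj01 : j0 ≠ j1 := Ne.symm (jmp_ne j0 le_rfl hn2)
    obtain ⟨i, hia, hib, hsum⟩ := cover hbal hunif hj01
    set t : ℕ := ((j0 - i : Fin (2*n+1))).val with htdef
    have hsubne : j0 - i ≠ 0 := sub_ne_zero.mpr (Ne.symm hia)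
    have ht0 : t ≠ 0 := fun h => hsubne (Fin.ext h)
    have ht2 : t ≤ 2*n := by have := ((j0 - i : Fin (2*n+1))).isLt; omega
    have ht1 : 1 ≤ t := by omega
    have hj0i : jmp n i t = j0 := by
      rw [htdef]; unfold jmp; rw [Fin.cast_val_eq_self]; abel
    have hj1i : jmp n i (t+1) = j1 := by
      rw [hj1def, ← hj0i]
      unfold jmp
      push_cast
      abel
    have htlt : t < 2*n := by
      rcases eq_or_lt_of_le ht2 with he | h
      · exfalso
        have hx : j1 = i := by
          rw [← hj1i]
          unfold jmp
          rw [he, Fin.natCast_self, add_zero]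
        exact hib hx.symm
      · exact h
    have htp2 : t + 1 ≤ 2*n := by omega
    have hDne0 : cdet (v ((i:ℕ):ℤ)) (v ((j0:ℕ):ℤ)) ≠ 0 := D_ne_zero hunif hia
    have hDne1 : cdet (v ((i:ℕ):ℤ)) (v ((j1:ℕ):ℤ)) ≠ 0 := D_ne_zero hunif hib
    have htn : t = n := by
      rcases lt_trichotomy (cdet (v ((i:ℕ):ℤ)) (v ((j0:ℕ):ℤ))) 0 with hlt | h0 | hgt
      · exfalso
        have hpos1 : 0 < cdet (v ((i:ℕ):ℤ)) (v ((j1:ℕ):ℤ)) := by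
          rcases lt_trichotomy (cdet (v ((i:ℕ):ℤ)) (v ((j1:ℕ):ℤ))) 0 with hl | h0' | hg
          · linarith
          · exact absurd h0' hDne1
          · exact hg
        rw [← hj0i] at hlt
        rw [← hj1i] at hpos1
        have hA := (D_neg_iff_gt hn hρ hα hmono hbal hunif hv i ht1 ht2).mp hlt
        have hB := (D_pos_iff_le hn hρ hα hmono hbal hunif hv i (by omega) htp2).mp hpos1
        omega
      · exact absurd h0 hDne0
      · have hneg1 : cdet (v ((i:ℕ):ℤ)) (v ((j1:ℕ):ℤ)) < 0 := by
          rcases lt_trichotomy (cdet (v ((i:ℕ):ℤ)) (v ((j1:ℕ):ℤ))) 0 with hl | h0' | hg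
          · exact hl
          · exact absurd h0' hDne1
          · linarith
        rw [← hj0i] at hgt
        rw [← hj1i] at hneg1
        have hA := (D_pos_iff_le hn hρ hα hmono hbal hunif hv i ht1 ht2).mp hgt
        have hB := (D_neg_iff_gt hn hρ hα hmono hbal hunif hv i (by omega) htp2).mp hneg1
        omega
    have hif : i = iF := by
      have h := hj0i
      rw [htn, hj0def] at h
      unfold jmp at h
      exact add_right_cancel h
    rw [hif] at hsum
    have e0 : (v ((j0 : ℕ) : ℤ)) = v (((iF : ℕ) : ℤ) + (n:ℤ)) := by
      rw [hj0def, jmp_val iF (show n ≤ 2*n by omega), v_nat_mod hper (iF.val + n)]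
      all_goals congr 1
      all_goals push_cast
      all_goals ring
    have e1 : (v ((j1 : ℕ) : ℤ)) = v (((iF : ℕ) : ℤ) + (n:ℤ) + 1) := by
      rw [hj1', jmp_val iF (show n+1 ≤ 2*n by omega), v_nat_mod hper (iF.val + (n+1))]
      all_goals congr 1
      all_goals push_cast
      all_goals ring
    rw [e0, e1] at hsum
    show cdet (v ((iF:ℕ):ℤ)) (v (((iF:ℕ):ℤ) + (n:ℤ)))
        = cdet (v (((iF:ℕ):ℤ) + ((n:ℤ)+1))) (v ((((iF:ℕ):ℤ) + ((n:ℤ)+1)) + (n:ℤ)))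
    have ev : v ((((iF:ℕ):ℤ) + ((n:ℤ)+1)) + (n:ℤ)) = v (((iF:ℕ):ℤ)) := by
      have e : (((iF:ℕ):ℤ) + ((n:ℤ)+1)) + (n:ℤ) = ((iF:ℕ):ℤ) + (2*(n:ℤ)+1) := by ring
      rw [e, hper]
    rw [ev]
    have e3 : ((iF:ℕ):ℤ) + ((n:ℤ)+1) = ((iF:ℕ):ℤ) + (n:ℤ) + 1 := by ring
    rw [e3]
    have hsw := cdet_swap (v (((iF:ℕ):ℤ) + (n:ℤ) + 1)) (v ((iF:ℕ):ℤ))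
    linarith [hsum, hsw]
  have hstep : ∀ k : ℤ, d k = d (k + ((n:ℤ)+1)) := by
    intro k
    have hM : (0:ℤ) < 2*(n:ℤ)+1 := by positivity
    have hr0 : 0 ≤ k % (2*(n:ℤ)+1) := Int.emod_nonneg k (by omega)
    have hrlt : k % (2*(n:ℤ)+1) < 2*(n:ℤ)+1 := Int.emod_lt_of_pos k hM
    set iF : Fin (2*n+1) := ⟨(k % (2*(n:ℤ)+1)).toNat, by omega⟩ with hiF
    have hval : ((iF : ℕ) : ℤ) = k % (2*(n:ℤ)+1) := Int.toNat_of_nonneg hr0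
    have hcong1 : d k = d ((iF:ℕ):ℤ) :=
      hdcongr _ _ (by rw [hval]; exact (Int.emod_emod_of_dvd _ dvd_rfl).symm)
    have hcong2 : d (((iF:ℕ):ℤ) + ((n:ℤ)+1)) = d (k + ((n:ℤ)+1)) :=
      hdcongr _ _ (by
        rw [Int.add_emod, hval, Int.emod_emod_of_dvd _ dvd_rfl, ← Int.add_emod])
    rw [hcong1, hrel iF]
    exact hcong2
  have hone : ∀ k : ℤ, d k = d (k + 1) := by
    intro k
    have hA := hstep k
    have hB := hstep (k + ((n:ℤ)+1))
    have hper' : d ((k+1) + (2*(n:ℤ)+1)) = d (k+1) := by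
      show cdet (v ((k+1) + (2*(n:ℤ)+1))) (v (((k+1) + (2*(n:ℤ)+1)) + (n:ℤ)))
          = cdet (v (k+1)) (v ((k+1) + (n:ℤ)))
      rw [hper (k+1)]
      have e : ((k+1) + (2*(n:ℤ)+1)) + (n:ℤ) = ((k+1) + (n:ℤ)) + (2*(n:ℤ)+1) := by ring
      rw [e, hper ((k+1) + (n:ℤ))]
    have e2 : k + ((n:ℤ)+1) + ((n:ℤ)+1) = (k+1) + (2*(n:ℤ)+1) := by ring
    rw [hA, hB, e2]
    exact hper'
  have hzero : ∀ k : ℤ, d k = d 0 := by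
    intro k
    induction k using Int.induction_on with
    | zero => rfl
    | succ a ih =>
        rw [← hone (a:ℤ)]
        exact ih
    | pred a ih =>
        have h := hone (-(a:ℤ) - 1)
        have e : (-(a:ℤ) - 1) + 1 = -(a:ℤ) := by ring
        rw [e] at h
        rw [h]
        exact ih
  intro k
  calc cdet (v k) (v (k + (n:ℤ))) = d k := rfl
  _ = d 0 := hzero k
  _ = cdet (v 0) (v (n:ℤ)) := by
      show cdet (v 0) (v (0 + (n:ℤ))) = cdet (v 0) (v (n:ℤ))
      rw [zero_add]
end
end

section
/- Define sequences u_i(t), w_i(t) in R^2 by u_0(t) = (1,0), w_0(t) = (t,-1), u_{i+1}(t) = -t·w_i(t) - u_i(t), w_{i+1}(t) = t·u_i(t) - w_i(t). Then the equation w_n(t) = (1,0) has at most n real solutions t. -/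
noncomputable section
open Real

/-- The pair `(u_i(t), w_i(t))` of the recursion `u_0 = (1,0)`, `w_0 = (t,-1)`,
`u_{i+1} = -t·w_i - u_i`, `w_{i+1} = t·u_i - w_i`. -/
def UW (t : ℝ) : ℕ → (ℝ × ℝ) × (ℝ × ℝ)
  | 0 => ((1, 0), (t, -1))
  | (i + 1) => ((-t) • (UW t i).2 - (UW t i).1, t • (UW t i).1 - (UW t i).2)

/-- The sequence `u_i(t)`. -/
def useq (i : ℕ) (t : ℝ) : ℝ × ℝ := (UW t i).1

/-- The sequence `w_i(t)`. -/
def wseq (i : ℕ) (t : ℝ) : ℝ × ℝ := (UW t i).2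

/-!
The second coordinate of `w_n(t)` is a polynomial in `t` of degree at most `2n`, and it is
nonzero since its value at `t = 0` is `(-1)^(n+1)`; so it has at most `2n` real roots. Replacing
`t` by `-t` negates the first coordinate of `w_n(t)` and keeps the second. Hence if `w_n(t) = (1,0)`
then `-t` is a root of the second coordinate but not a solution: the solutions and their negatives
are disjoint sets of roots, and there are at most `n` solutions.
-/

open Polynomial Pointwise

/-- The second coordinates `(u_i(t).2, w_i(t).2)` obey a recursion of their own; these are its
solutions as polynomials in `t`. -/
def uwSndPoly : ℕ → ℝ[X] × ℝ[X]
  | 0 => (0, -1)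
  | i + 1 => (-X * (uwSndPoly i).2 - (uwSndPoly i).1, X * (uwSndPoly i).1 - (uwSndPoly i).2)

lemma eval_uwSndPoly (t : ℝ) (i : ℕ) :
    ((uwSndPoly i).1.eval t, (uwSndPoly i).2.eval t) = ((UW t i).1.2, (UW t i).2.2) := by
  induction i with
  | zero => simp [uwSndPoly, UW]
  | succ i ih =>
    simp only [Prod.ext_iff] at ih
    simp [uwSndPoly, UW, ih.1, ih.2]

lemma natDegree_uwSndPoly_le (i : ℕ) :
    (uwSndPoly i).1.natDegree ≤ 2 * i ∧ (uwSndPoly i).2.natDegree ≤ 2 * i := by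
  induction i with
  | zero => simp [uwSndPoly]
  | succ i ih =>
    obtain ⟨h₁, h₂⟩ := ih
    constructor <;> simp only [uwSndPoly] <;> compute_degree <;> omega

lemma UW_zero_snd_snd (n : ℕ) : (UW 0 n).2.2 = (-1) ^ (n + 1) := by
  induction n with
  | zero => simp [UW]
  | succ n ih => simp [UW, ih, pow_succ]

lemma uwSndPoly_snd_ne_zero (n : ℕ) : (uwSndPoly n).2 ≠ 0 := by
  intro h
  have := congrArg Prod.snd (eval_uwSndPoly 0 n)
  simp only [h, eval_zero, UW_zero_snd_snd] at this
  exact pow_ne_zero _ (by norm_num) this.symm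

lemma UW_neg (t : ℝ) (i : ℕ) :
    UW (-t) i = (((UW t i).1.1, -(UW t i).1.2), (-(UW t i).2.1, (UW t i).2.2)) := by
  induction i with
  | zero => simp [UW]
  | succ i ih =>
    simp only [UW, ih, Prod.smul_mk, Prod.mk_sub_mk, smul_eq_mul, Prod.mk.injEq, Prod.fst_sub,
      Prod.snd_sub, Prod.smul_fst, Prod.smul_snd]
    refine ⟨⟨?_, ?_⟩, ?_, ?_⟩ <;> ring

lemma wseq_neg (n : ℕ) (t : ℝ) : wseq n (-t) = (-(wseq n t).1, (wseq n t).2) := by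
  simp [wseq, UW_neg]

lemma setOf_wseq_snd_eq_zero (n : ℕ) :
    {t : ℝ | (wseq n t).2 = 0} = (uwSndPoly n).2.rootSet ℝ := by
  ext t
  have := congrArg Prod.snd (eval_uwSndPoly t n)
  simp_all [mem_rootSet, uwSndPoly_snd_ne_zero, wseq]

lemma two_mul_ncard_le_of_disjoint_neg {G : Type*} [InvolutiveNeg G] {S R : Set G}
    (hR : R.Finite) (hSR : S ⊆ R) (hnegSR : -S ⊆ R) (hdisj : Disjoint S (-S)) :
    2 * S.ncard ≤ R.ncard := by
  have hS : S.Finite := hR.subset hSR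
  calc 2 * S.ncard = S.ncard + (-S).ncard := by rw [Set.ncard_neg, two_mul]
    _ = (S ∪ -S).ncard := (Set.ncard_union_eq hdisj hS hS.neg).symm
    _ ≤ R.ncard := Set.ncard_le_ncard (Set.union_subset hSR hnegSR) hR

theorem wn_eq_e1_at_most_n_solutions_general (n : ℕ) :
    {t : ℝ | wseq n t = (1, 0)}.Finite ∧ {t : ℝ | wseq n t = (1, 0)}.ncard ≤ n := by
  set S := {t : ℝ | wseq n t = (1, 0)}
  set p := (uwSndPoly n).2
  have hR : (p.rootSet ℝ).Finite := p.rootSet_finite ℝ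
  have hSR : S ⊆ p.rootSet ℝ := by
    rw [← setOf_wseq_snd_eq_zero]
    intro t (ht : wseq n t = (1, 0))
    simp [ht]
  have hnegSR : -S ⊆ p.rootSet ℝ := by
    rw [← setOf_wseq_snd_eq_zero]
    intro t (ht : wseq n (-t) = (1, 0))
    simpa [wseq_neg] using congrArg Prod.snd ht
  have hdisj : Disjoint S (-S) := by
    refine Set.disjoint_left.2 fun t (ht : wseq n t = (1, 0)) (hneg : wseq n (-t) = (1, 0)) => ?_
    have := congrArg Prod.fst hneg
    norm_num [wseq_neg, ht] at this
  refine ⟨hR.subset hSR, ?_⟩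
  have : 2 * S.ncard ≤ 2 * n :=
    calc 2 * S.ncard ≤ (p.rootSet ℝ).ncard := two_mul_ncard_le_of_disjoint_neg hR hSR hnegSR hdisj
      _ ≤ p.natDegree := p.ncard_rootSet_le ℝ
      _ ≤ 2 * n := (natDegree_uwSndPoly_le n).2
  omega

theorem wn_eq_e1_at_most_n_solutions (n : ℕ) (hn : 1 ≤ n) :
    {t : ℝ | wseq n t = (1, 0)}.Finite ∧ {t : ℝ | wseq n t = (1, 0)}.ncard ≤ n :=
  wn_eq_e1_at_most_n_solutions_general n
end
end

section
/- Let C = {v_0,...,v_{2n}} be a uniform balanced configuration labeled by increasing arguments. Then exactly n of the indices i ∈ {1,...,2n} satisfy det(v_0,v_i) > 0; consequently the polar angles satisfy α_n - α_0 < π < α_{n+1} - α_0. -/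
noncomputable section
open Real

/-! For `i ≠ 0` put `θᵢ = αᵢ - α₀ ∈ (0, 2π)`. Then `det(v₀, vᵢ) = ρ₀ρᵢ sin θᵢ` is positive exactly
when `θᵢ < π`, and it never vanishes by uniformity. Balancedness at `v₀` makes the positive and
negative values equally many, so `n` of the `2n` determinants are positive; since `θ` is
increasing, the positive ones are exactly those with `i = 1, …, n`. -/

open Finset

theorem card_filter_pos_eq_card_filter_neg {ι : Type*} (s : Finset ι) (f : ι → ℝ)
    (h : ∀ x, #{j ∈ s | f j = x} = #{j ∈ s | f j = -x}) :
    #{j ∈ s | 0 < f j} = #{j ∈ s | f j < 0} := by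
  classical
  -- Count both sides along the fibres of `|f|`; over `x > 0` these are the fibres of `f` at `±x`.
  have fiber (x : ℝ) : #{j ∈ s | 0 < f j ∧ |f j| = x} = #{j ∈ s | f j < 0 ∧ |f j| = x} := by
    rcases le_or_gt x 0 with hx | hx
    · rw [filter_false_of_mem fun j _ => by grind, filter_false_of_mem fun j _ => by grind]
    · convert h x using 2 <;> refine filter_congr fun j _ => ?_ <;> grind
  have maps (p : ι → Prop) [DecidablePred p] :
      Set.MapsTo (fun j => |f j|) ({j ∈ s | p j} : Finset ι) (s.image fun j => |f j|) :=
    fun j hj => mem_image_of_mem _ (mem_filter.1 hj).1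
  rw [card_eq_sum_card_fiberwise (maps _), card_eq_sum_card_fiberwise (maps _)]
  simp only [filter_filter, fiber]

theorem Monotone.lt_iff_val_lt_card {m : ℕ} {β : Type*} [Preorder β] [DecidableLT β]
    {f : Fin m → β} (hf : Monotone f) (c : β) (i : Fin m) :
    f i < c ↔ (i : ℕ) < #{j | f j < c} := by
  constructor
  · intro hi
    calc (i : ℕ) < #(Iic i) := by rw [Fin.card_Iic]; omega
      _ ≤ #{j | f j < c} := card_le_card fun j hj =>
        mem_filter.2 ⟨mem_univ j, (hf (mem_Iic.1 hj)).trans_lt hi⟩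
  · intro hi
    by_contra hic
    have : #{j | f j < c} ≤ #(Iio i) := card_le_card fun j hj =>
      mem_Iio.2 (not_le.1 fun hij => hic ((hf hij).trans_lt (mem_filter.1 hj).2))
    rw [Fin.card_Iio] at this
    omega

theorem Real.sin_pos_iff_lt_pi {θ : ℝ} (h0 : 0 < θ) (h2π : θ < 2 * π) : 0 < sin θ ↔ θ < π := by
  refine ⟨fun hsin => not_le.1 fun hπ => hsin.not_ge ?_, sin_pos_of_pos_of_lt_pi h0⟩
  rw [← sin_sub_two_pi]
  exact sin_nonpos_of_nonpos_of_neg_pi_le (by linarith) (by linarith)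

theorem Real.sin_neg_iff_pi_lt {θ : ℝ} (h0 : 0 < θ) (h2π : θ < 2 * π) : sin θ < 0 ↔ π < θ := by
  refine ⟨fun hsin => not_le.1 fun hπ => hsin.not_ge (sin_nonneg_of_nonneg_of_le_pi h0.le hπ),
    fun hπ => ?_⟩
  rw [← sin_sub_two_pi]
  exact sin_neg_of_neg_of_neg_pi_lt (by linarith) (by linarith)

theorem cdet_ofReal_mul_exp (r s a b : ℝ) :
    cdet (r * Complex.exp (a * Complex.I)) (s * Complex.exp (b * Complex.I)) =
      r * s * sin (b - a) := by
  simp only [cdet, Complex.mul_re, Complex.mul_im, Complex.ofReal_re, Complex.ofReal_im,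
    Complex.exp_ofReal_mul_I_re, Complex.exp_ofReal_mul_I_im, sin_sub]
  ring

theorem cdet_ofReal_mul_exp_pos_iff {r s a b : ℝ} (hr : 0 < r) (hs : 0 < s) (hab : a < b)
    (hba : b < a + 2 * π) :
    0 < cdet (r * Complex.exp (a * Complex.I)) (s * Complex.exp (b * Complex.I)) ↔ b < a + π := by
  rw [cdet_ofReal_mul_exp, mul_pos_iff_of_pos_left (mul_pos hr hs),
    sin_pos_iff_lt_pi (by linarith) (by linarith), sub_lt_iff_lt_add']

theorem cdet_ofReal_mul_exp_neg_iff {r s a b : ℝ} (hr : 0 < r) (hs : 0 < s) (hab : a < b)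
    (hba : b < a + 2 * π) :
    cdet (r * Complex.exp (a * Complex.I)) (s * Complex.exp (b * Complex.I)) < 0 ↔ a + π < b := by
  rw [cdet_ofReal_mul_exp, ← neg_pos, ← mul_neg, mul_pos_iff_of_pos_left (mul_pos hr hs), neg_pos,
    sin_neg_iff_pi_lt (by linarith) (by linarith), lt_sub_iff_add_lt']

theorem cdet_ne_zero_of_linearIndependent {z w : ℂ} (h : LinearIndependent ℝ ![z, w]) :
    cdet z w ≠ 0 := by
  intro hzw
  rw [LinearIndependent.pair_iff] at h
  have hre := h w.re (-z.re) (by apply Complex.ext <;> simp [cdet] at hzw ⊢ <;> linarith)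
  have him := h w.im (-z.im) (by apply Complex.ext <;> simp [cdet] at hzw ⊢ <;> linarith)
  have hz : z = 0 := Complex.ext (by simpa using hre.2) (by simpa using him.2)
  simpa using h 1 0 (by simp [hz])

theorem UniformConfig.cdet_ne_zero {m : ℕ} {v : Fin m → ℂ} (h : UniformConfig v) {i j : Fin m}
    (hij : i ≠ j) : cdet (v i) (v j) ≠ 0 :=
  cdet_ne_zero_of_linearIndependent (h i j hij)

theorem BalancedConfig.two_mul_card_cdet_pos {m : ℕ} {v : Fin m → ℂ} (hbal : BalancedConfig v)
    (hunif : UniformConfig v) (i : Fin m) :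
    2 * #{j | j ≠ i ∧ 0 < cdet (v i) (v j)} = m - 1 := by
  set s : Finset (Fin m) := {j | j ≠ i}
  have hsym : #{j ∈ s | 0 < cdet (v i) (v j)} = #{j ∈ s | cdet (v i) (v j) < 0} := by
    refine card_filter_pos_eq_card_filter_neg _ _ fun x => ?_
    simpa only [s, Set.ncard_eq_toFinset_card', Set.toFinset_ofPred, filter_filter] using hbal i x
  have hneg : {j ∈ s | cdet (v i) (v j) < 0} = {j ∈ s | ¬ 0 < cdet (v i) (v j)} :=
    filter_congr fun j hj => ⟨not_lt_of_gt, fun h => (not_lt.1 h).lt_of_ne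
      (hunif.cdet_ne_zero (mem_filter.1 hj).2.symm)⟩
  have hsplit := card_filter_add_card_filter_not (s := s) fun j => 0 < cdet (v i) (v j)
  have hcard : #s = m - 1 := by simp [s, filter_ne']
  rw [← hneg, ← hsym, hcard] at hsplit
  simp only [s, filter_filter] at hsplit
  omega

theorem half_positive_dets (n : ℕ) (hn : 1 ≤ n)
    (v : Fin (2 * n + 1) → ℂ)
    (hbal : BalancedConfig v) (hunif : UniformConfig v)
    (ρ α : Fin (2 * n + 1) → ℝ)
    (hρ : ∀ i, 0 < ρ i)
    (hα : ∀ i, α i ∈ Set.Ico 0 (2 * π))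
    (hmono : StrictMono α)
    (hv : ∀ i, v i = (ρ i : ℂ) * Complex.exp (α i * Complex.I)) :
    {i : Fin (2 * n + 1) | i ≠ ⟨0, by omega⟩ ∧ 0 < cdet (v ⟨0, by omega⟩) (v i)}.ncard = n ∧
    α ⟨n, by omega⟩ - α ⟨0, by omega⟩ < π ∧
    π < α ⟨n + 1, by omega⟩ - α ⟨0, by omega⟩ := by
  set z : Fin (2 * n + 1) := ⟨0, by omega⟩
  have hαz (i : Fin (2 * n + 1)) (hi : i ≠ z) : α z < α i ∧ α i < α z + 2 * π :=
    ⟨hmono (Fin.lt_def.2 (Nat.pos_of_ne_zero fun h => hi (Fin.ext h))),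
      by linarith [(hα i).2, (hα z).1]⟩
  have hpos (i : Fin (2 * n + 1)) (hi : i ≠ z) : 0 < cdet (v z) (v i) ↔ α i < α z + π := by
    rw [hv, hv]
    exact cdet_ofReal_mul_exp_pos_iff (hρ z) (hρ i) (hαz i hi).1 (hαz i hi).2
  have hcard : #{i | i ≠ z ∧ 0 < cdet (v z) (v i)} = n := by
    have := hbal.two_mul_card_cdet_pos hunif z
    omega
  have hlower : #{i | α i < α z + π} = n + 1 := calc
    _ = #(insert z ({i | i ≠ z ∧ 0 < cdet (v z) (v i)} : Finset _)) := by
      congr 1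
      ext i
      by_cases hi : i = z
      · simp [hi, pi_pos]
      · simp [hi, hpos i hi]
    _ = n + 1 := by rw [card_insert_of_notMem (by simp), hcard]
  have hangle := hmono.monotone.lt_iff_val_lt_card (α z + π)
  refine ⟨?_, ?_, ?_⟩
  · simpa only [Set.ncard_eq_toFinset_card', Set.toFinset_ofPred] using hcard
  · rw [sub_lt_iff_lt_add', hangle, hlower]
    exact Nat.lt_succ_self n
  · have hne : (⟨n + 1, by omega⟩ : Fin (2 * n + 1)) ≠ z := by simp [z, Fin.ext_iff]
    have hnotpos : ¬ 0 < cdet (v z) (v ⟨n + 1, by omega⟩) := by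
      rw [hpos _ hne, hangle, hlower]
      exact lt_irrefl _
    rw [lt_sub_iff_add_lt', ← cdet_ofReal_mul_exp_neg_iff (hρ z) (hρ _) (hαz _ hne).1
      (hαz _ hne).2, ← hv, ← hv]
    exact (not_lt.1 hnotpos).lt_of_ne (hunif.cdet_ne_zero hne.symm)
end
end
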